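/- arXiv:1609.04441 — 2 statements merged into one kernel-verified Lean document; each statement's English description precedes it below -/
import Mathlib

section
/- Let s ∈ (0,1), γ > 0, and let N ≥ 2 be an integer. Then the ODE system ẋ_i = γ Σ_{j≠i} ζ_i ζ_j (x_i − x_j)/(2s|x_i − x_j|^{1+2s}), i = 1,…,N, does not admit stationary points: there exist no ζ_1,…,ζ_N ∈ {−1,1} and no real numbers x_1 < x_2 < … < x_N such that Σ_{j≠i} ζ_i ζ_j (x_i − x_j)/(2s|x_i − x_j|^{1+2s}) = 0 for every i = 1,…,N. -/
/-!
Dividing the equation of particle `k` by `ζ k` and splitting its sum at `k`, stationarity says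
that the particles on the left of `k` and those on its right exert the same signed push
`∑ ζ j |x k - x j| ^ (-2s)`. The equations are invariant under `ζ ↦ -ζ`, so let `ζ 1 = 1`, and
let `k` be the first maximum of the walk `S m = ζ 1 + ⋯ + ζ m`. Read from `k` outwards, the
charges on the left have nonnegative partial sums and those on the right nonpositive ones, while
the weights `|x k - x j| ^ (-2s)` strictly decrease. Abel summation then makes the left push
positive unless `k = 1` and the right push negative unless `k = N`; as `N ≥ 2`, one of the two
holds.
-/

open Real Filter Finset Topology NNReal
open scoped ENNReal

noncomputable section

/-- The fractional Laplacian `I_s` of order `2s` (up to a normalizing constant). -/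
def fracLap (s : ℝ) (φ : ℝ → ℝ) (x : ℝ) : ℝ :=
  (1 / 2) * ∫ y : ℝ, (φ (x + y) + φ (x - y) - 2 * φ x) / |y| ^ (1 + 2 * s)

/-- `W` is a `C^{3,α}` periodic multi-well potential with nondegenerate minima at the integers. -/
structure IsMultiWell (W : ℝ → ℝ) : Prop where
  smooth : ContDiff ℝ 3 W
  holder : ∃ α : ℝ≥0, 0 < α ∧ (α : ℝ) < 1 ∧ ∃ C : ℝ≥0, HolderWith C α (iteratedDeriv 3 W)
  periodic : ∀ v : ℝ, W (v + 1) = W v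
  zero_int : ∀ k : ℤ, W (k : ℝ) = 0
  pos_off_int : ∀ v : ℝ, (∀ k : ℤ, v ≠ (k : ℝ)) → 0 < W v
  nondeg : 0 < iteratedDeriv 2 W 0

/-- Regularity and boundedness assumptions on the external stress `σ = σ(t,x)`. -/
structure SigmaAssumption (s : ℝ) (σ : ℝ → ℝ → ℝ) : Prop where
  buc : UniformContinuousOn (Function.uncurry σ) (Set.Ici 0 ×ˢ Set.univ)
  bdd : ∃ B : ℝ, ∀ t x : ℝ, 0 ≤ t → |σ t x| ≤ B
  reg : ∃ M : ℝ, 0 < M ∧ ∃ α : ℝ, s < α ∧ α < 1 ∧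
    (∀ t x : ℝ, 0 ≤ t → |deriv (σ t) x| ≤ M) ∧
    (∀ t x : ℝ, 0 ≤ t → |deriv (fun τ => σ τ x) t| ≤ M) ∧
    (∀ t x h : ℝ, 0 ≤ t → |deriv (σ t) (x + h) - deriv (σ t) x| ≤ M * |h| ^ α)

/-- The basic layer solution (heteroclinic) associated with `I_s` and `W`. -/
structure IsLayerSolution (s : ℝ) (W : ℝ → ℝ) (u : ℝ → ℝ) : Prop where
  smooth : ContDiff ℝ 2 u
  eqn : ∀ x : ℝ, fracLap s u x = deriv W (u x)
  mono : ∀ x : ℝ, 0 < deriv u x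
  lim_bot : Tendsto u atBot (nhds 0)
  lim_top : Tendsto u atTop (nhds 1)
  half : u 0 = 1 / 2

/-- `γ := (∫ (u')²)⁻¹`. -/
def layerGamma (u : ℝ → ℝ) : ℝ := (∫ x : ℝ, (deriv u x) ^ 2)⁻¹

/-- Bounded solution of the parabolic Peierls–Nabarro equation
`ε ∂_t v = I_s v - ε^{-2s} W'(v) + σ` with initial datum `v0`. -/
structure IsDislocationSol (s : ℝ) (W : ℝ → ℝ) (σ : ℝ → ℝ → ℝ) (ε : ℝ)
    (v : ℝ → ℝ → ℝ) (v0 : ℝ → ℝ) : Prop where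
  init : ∀ x : ℝ, v 0 x = v0 x
  bdd : ∃ B : ℝ, ∀ t x : ℝ, |v t x| ≤ B
  eqn : ∀ t : ℝ, 0 < t → ∀ x : ℝ,
    HasDerivAt (fun τ => v τ x)
      ((fracLap s (v t) x - (1 / ε ^ (2 * s)) * deriv W (v t x) + σ t x) / ε) t

/-- Right-hand side of the particle system, with stress `σ` and constant extra forcing `δ`. -/
def odeRHS (s γ : ℝ) (N : ℕ) (σ : ℝ → ℝ → ℝ) (ζ : ℕ → ℝ) (δ : ℝ)
    (x : ℕ → ℝ → ℝ) (i : ℕ) (t : ℝ) : ℝ :=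
  γ * ((∑ j ∈ (Finset.Icc 1 N).erase i,
      ζ i * ζ j * (x i t - x j t) / (2 * s * |x i t - x j t| ^ (1 + 2 * s)))
    - ζ i * σ t (x i t) - ζ i * δ)

/-- Solution of the particle system on `[0, T]`, with ordered particles on `[0, T)`. -/
structure IsODEFlowOn (s γ : ℝ) (N : ℕ) (σ : ℝ → ℝ → ℝ) (ζ : ℕ → ℝ) (δ : ℝ)
    (y0 : ℕ → ℝ) (x : ℕ → ℝ → ℝ) (T : ℝ) : Prop where
  init : ∀ i ∈ Finset.Icc 1 N, x i 0 = y0 i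
  cont : ∀ i ∈ Finset.Icc 1 N, ContinuousOn (x i) (Set.Icc 0 T)
  derivEq : ∀ i ∈ Finset.Icc 1 N, ∀ t ∈ Set.Ioo (0 : ℝ) T,
    HasDerivAt (x i) (odeRHS s γ N σ ζ δ x i t) t
  sep : ∀ i : ℕ, 1 ≤ i → i < N → ∀ t ∈ Set.Ico (0 : ℝ) T, x i t < x (i + 1) t

/-- Two consecutive particles touch at time `T`. -/
def HasCollisionAt (N : ℕ) (x : ℕ → ℝ → ℝ) (T : ℝ) : Prop :=
  ∃ i0 : ℕ, 1 ≤ i0 ∧ i0 < N ∧ x i0 T = x (i0 + 1) T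

/-- Solution of the particle system up to its (possibly infinite) collision time `Tc`. -/
structure IsODEFlow (s γ : ℝ) (N : ℕ) (σ : ℝ → ℝ → ℝ) (ζ : ℕ → ℝ) (δ : ℝ)
    (y0 : ℕ → ℝ) (x : ℕ → ℝ → ℝ) (Tc : ℝ≥0∞) : Prop where
  pos : 0 < Tc
  init : ∀ i ∈ Finset.Icc 1 N, x i 0 = y0 i
  derivEq : ∀ i ∈ Finset.Icc 1 N, ∀ t : ℝ, 0 < t → ENNReal.ofReal t < Tc →
    HasDerivAt (x i) (odeRHS s γ N σ ζ δ x i t) t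
  sep : ∀ i : ℕ, 1 ≤ i → i < N → ∀ t : ℝ, 0 ≤ t → ENNReal.ofReal t < Tc →
    x i t < x (i + 1) t
  coll : Tc ≠ ⊤ → (∀ i ∈ Finset.Icc 1 N, ContinuousOn (x i) (Set.Icc 0 Tc.toReal)) ∧
    HasCollisionAt N x Tc.toReal

/-- Segregate orientation: the first `K` layers are positive, the last `N - K` negative. -/
def Segregate (ζ : ℕ → ℝ) (K N : ℕ) : Prop :=
  (∀ i : ℕ, 1 ≤ i → i ≤ K → ζ i = 1) ∧ (∀ i : ℕ, K < i → i ≤ N → ζ i = -1)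

/-- The initial dislocation datum `v_ε^0`. -/
def initialDatum (s β : ℝ) (σ : ℝ → ℝ → ℝ) (u : ℝ → ℝ) (N K : ℕ) (ζ x0 : ℕ → ℝ)
    (ε x : ℝ) : ℝ :=
  ε ^ (2 * s) / β * σ 0 x + (∑ i ∈ Finset.Icc 1 N, u (ζ i * (x - x0 i) / ε))
    - ((N : ℝ) - (K : ℝ))

/-- The Heaviside function. -/
def heaviside (x : ℝ) : ℝ := if 0 < x then 1 else 0

/-- `η := (∫ (u')²) / W''(0)`. -/
def layerEta (W u : ℝ → ℝ) : ℝ := (∫ x : ℝ, (deriv u x) ^ 2) / iteratedDeriv 2 W 0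

/-- The corrector `ψ`, i.e. the bounded solution of
`I_s ψ - W''(u) ψ = u' + η (W''(u) - W''(0))` vanishing at infinity. -/
structure IsCorrector (s : ℝ) (W u ψ : ℝ → ℝ) : Prop where
  bdd : ∃ B : ℝ, ∀ x : ℝ, |ψ x| ≤ B
  eqn : ∀ x : ℝ, fracLap s ψ x - iteratedDeriv 2 W (u x) * ψ x
    = deriv u x + layerEta W u * (iteratedDeriv 2 W (u x) - iteratedDeriv 2 W 0)
  lim_bot : Tendsto ψ atBot (nhds 0)
  lim_top : Tendsto ψ atTop (nhds 0)

/-- The barrier `v̄_ε` built by superposing translated layers and correctors. -/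
def superBarrier (s β : ℝ) (σ : ℝ → ℝ → ℝ) (u ψ : ℝ → ℝ) (N K : ℕ) (ζ : ℕ → ℝ)
    (δ ε : ℝ) (xb : ℕ → ℝ → ℝ) (t x : ℝ) : ℝ :=
  ε ^ (2 * s) * ((σ t x + δ) / β)
    + (∑ i ∈ Finset.Icc 1 N, u (ζ i * (x - xb i t) / ε)) - ((N : ℝ) - (K : ℝ))
    - ∑ i ∈ Finset.Icc 1 N, ζ i * ε ^ (2 * s) * deriv (xb i) t * ψ (ζ i * (x - xb i t) / ε)

theorem Finset.sum_range_mul_pos_of_sum_range_nonneg {a w : ℕ → ℝ} {n : ℕ} (hn : n ≠ 0)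
    (hw : StrictAntiOn w (Set.Iio n)) (hw_pos : ∀ i < n, 0 < w i)
    (ha : ∀ m ≤ n, 0 ≤ ∑ i ∈ range m, a i) (ha0 : a 0 ≠ 0) :
    0 < ∑ i ∈ range n, a i * w i := by
  have ha0_pos : 0 < a 0 := ((ha 1 (by omega)).trans_eq (by simp)).lt_of_ne' ha0
  have hparts := sum_range_by_parts w a n
  simp only [smul_eq_mul] at hparts
  obtain rfl | hn2 : n = 1 ∨ 2 ≤ n := by omega
  · simpa using mul_pos ha0_pos (hw_pos 0 one_pos)
  have hlast : 0 ≤ w (n - 1) * ∑ i ∈ range n, a i :=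
    mul_nonneg (hw_pos _ (by omega)).le (ha n le_rfl)
  have hdiff : 0 < ∑ i ∈ range (n - 1), (w i - w (i + 1)) * ∑ j ∈ range (i + 1), a j := by
    refine sum_pos' (fun i hi => mul_nonneg ?_ (ha _ ?_)) ⟨0, ?_, ?_⟩
    · simp only [mem_range] at hi
      exact sub_nonneg.2 (hw.antitoneOn (by simp; omega) (by simp; omega) (by omega))
    · simp only [mem_range] at hi; omega
    · simp only [mem_range]; omega
    · simpa using mul_pos (sub_pos.2 (hw (by simp; omega) (by simp; omega) zero_lt_one)) ha0_pos
  have hneg : ∑ i ∈ range (n - 1), (w (i + 1) - w i) * ∑ j ∈ range (i + 1), a j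
      = -∑ i ∈ range (n - 1), (w i - w (i + 1)) * ∑ j ∈ range (i + 1), a j := by
    rw [← sum_neg_distrib]
    exact sum_congr rfl fun _ _ => by ring
  simp only [mul_comm (a _)]
  linarith

theorem Finset.sum_erase_Icc_eq_sum_range_add {M : Type*} [AddCommMonoid M] (f : ℕ → M)
    {k N : ℕ} (hk : k ∈ Icc 1 N) :
    ∑ j ∈ (Icc 1 N).erase k, f j =
      ∑ i ∈ range (k - 1), f (k - 1 - i) + ∑ i ∈ range (N - k), f (k + i + 1) := by
  simp only [mem_Icc] at hk
  rw [show (Icc 1 N).erase k = Ico 1 k ∪ Ioc k N by ext; simp; omega,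
    sum_union (disjoint_left.2 fun j => by simp; omega)]
  congr 1
  · refine sum_nbij' (fun j => k - 1 - j) (fun i => k - 1 - i) ?_ ?_ ?_ ?_ ?_ <;> intro i hi <;>
      simp only [mem_Ico, mem_range] at hi ⊢
    all_goals first | omega | (congr 1; omega)
  · refine sum_nbij' (fun j => j - k - 1) (fun i => k + i + 1) ?_ ?_ ?_ ?_ ?_ <;> intro i hi <;>
      simp only [mem_Ioc, mem_range] at hi ⊢
    all_goals first | omega | (congr 1; omega)

def prefixSum (ζ : ℕ → ℝ) (m : ℕ) : ℝ := ∑ i ∈ range m, ζ (i + 1)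

theorem prefixSum_succ (ζ : ℕ → ℝ) (m : ℕ) :
    prefixSum ζ (m + 1) = prefixSum ζ m + ζ (m + 1) :=
  sum_range_succ _ _

theorem prefixSum_add (ζ : ℕ → ℝ) (k m : ℕ) :
    prefixSum ζ (k + m) = prefixSum ζ k + ∑ i ∈ range m, ζ (k + i + 1) :=
  sum_range_add _ k m

theorem exists_intCast_eq_prefixSum {ζ : ℕ → ℝ} {N : ℕ}
    (hζ : ∀ i ∈ Icc 1 N, ζ i = 1 ∨ ζ i = -1) {m : ℕ} (hm : m ≤ N) :
    ∃ n : ℤ, prefixSum ζ m = n := by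
  induction m with
  | zero => exact ⟨0, by simp [prefixSum]⟩
  | succ m ih =>
    obtain ⟨n, hn⟩ := ih (by omega)
    rcases hζ (m + 1) (by simp; omega) with h | h
    · exact ⟨n + 1, by rw [prefixSum_succ, hn, h]; push_cast; ring⟩
    · exact ⟨n - 1, by rw [prefixSum_succ, hn, h]; push_cast; ring⟩

theorem exists_first_max_prefixSum {ζ : ℕ → ℝ} {N : ℕ} (hN : 1 ≤ N)
    (hζ : ∀ i ∈ Icc 1 N, ζ i = 1 ∨ ζ i = -1) (h1 : ζ 1 = 1) :
    ∃ k ∈ Icc 1 N, (∀ j < k, prefixSum ζ j ≤ prefixSum ζ (k - 1)) ∧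
      ∀ j ≤ N, prefixSum ζ j ≤ prefixSum ζ k := by
  classical
  have hmax : ∃ k, k ≤ N ∧ ∀ j ≤ N, prefixSum ζ j ≤ prefixSum ζ k := by
    obtain ⟨k, hk, hk_max⟩ :=
      (range (N + 1)).exists_max_image (prefixSum ζ) nonempty_range_add_one
    exact ⟨k, by simpa [Nat.lt_succ_iff] using hk, fun j hj => hk_max j (by simp; omega)⟩
  set k := Nat.find hmax
  obtain ⟨hkN, hk_max⟩ : k ≤ N ∧ ∀ j ≤ N, prefixSum ζ j ≤ prefixSum ζ k := Nat.find_spec hmax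
  have hk_first : ∀ j < k, prefixSum ζ j < prefixSum ζ k := by
    intro j hj
    have hj_not_max := Nat.find_min hmax hj
    push Not at hj_not_max
    obtain ⟨i, hi, hlt⟩ := hj_not_max (hj.le.trans hkN)
    exact hlt.trans_le (hk_max i hi)
  have hk1 : 1 ≤ k := by
    by_contra! h
    have := hk_max 1 hN
    norm_num [prefixSum, Nat.lt_one_iff.1 h, h1] at this
  have hk_step : prefixSum ζ k = prefixSum ζ (k - 1) + 1 := by
    have h := prefixSum_succ ζ (k - 1)
    rw [Nat.sub_add_cancel hk1] at h
    rcases hζ k (by simp; omega) with h' | h'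
    · rw [h, h']
    · have := hk_first (k - 1) (by omega); linarith
  refine ⟨k, by simp; omega, fun j hj => ?_, hk_max⟩
  -- prefix sums are integers, so `prefixSum ζ j < prefixSum ζ (k - 1) + 1` forces `≤`
  obtain ⟨a, ha⟩ := exists_intCast_eq_prefixSum hζ (show j ≤ N by omega)
  obtain ⟨b, hb⟩ := exists_intCast_eq_prefixSum hζ (show k - 1 ≤ N by omega)
  have hlt : (a : ℝ) < b + 1 := by rw [← ha, ← hb, ← hk_step]; exact hk_first j hj
  rw [ha, hb]
  exact_mod_cast Int.lt_add_one_iff.1 (by exact_mod_cast hlt)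

theorem exists_peak_index {ζ : ℕ → ℝ} {N : ℕ} (hN : 1 ≤ N)
    (hζ : ∀ i ∈ Icc 1 N, ζ i = 1 ∨ ζ i = -1) (h1 : ζ 1 = 1) :
    ∃ k ∈ Icc 1 N, (∀ m ≤ k - 1, 0 ≤ ∑ i ∈ range m, ζ (k - 1 - i)) ∧
      ∀ m ≤ N - k, ∑ i ∈ range m, ζ (k + i + 1) ≤ 0 := by
  obtain ⟨k, hk, hleft, hright⟩ := exists_first_max_prefixSum hN hζ h1
  simp only [mem_Icc] at hk
  refine ⟨k, by simpa using hk, fun m hm => ?_, fun m hm => ?_⟩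
  · have hsplit := prefixSum_add ζ (k - 1 - m) m
    rw [Nat.sub_add_cancel hm] at hsplit
    have hreflect : ∑ i ∈ range m, ζ (k - 1 - i) = ∑ i ∈ range m, ζ (k - 1 - m + i + 1) := by
      rw [← sum_range_reflect]
      exact sum_congr rfl fun i hi => by simp only [mem_range] at hi; congr 1; omega
    linarith [hleft (k - 1 - m) (by omega)]
  · linarith [prefixSum_add ζ k m, hright (k + m) (by omega)]

def leftSum (t : ℝ) (ζ x : ℕ → ℝ) (k : ℕ) : ℝ :=
  ∑ i ∈ range (k - 1), ζ (k - 1 - i) * (x k - x (k - 1 - i)) ^ (-t)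

def rightSum (t : ℝ) (N : ℕ) (ζ x : ℕ → ℝ) (k : ℕ) : ℝ :=
  ∑ i ∈ range (N - k), ζ (k + i + 1) * (x (k + i + 1) - x k) ^ (-t)

theorem div_abs_rpow_one_add {d : ℝ} (hd : 0 < d) (t : ℝ) : d / |d| ^ (1 + t) = d ^ (-t) := by
  rw [abs_of_pos hd, Real.rpow_add hd, Real.rpow_one, Real.rpow_neg hd.le]
  field_simp

theorem sum_interaction_eq_leftSum_sub_rightSum {s : ℝ} {ζ x : ℕ → ℝ} {N k : ℕ}
    (hx : StrictMonoOn x (Set.Icc 1 N)) (hk : k ∈ Icc 1 N) :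
    ∑ j ∈ (Icc 1 N).erase k, ζ k * ζ j * (x k - x j) / (2 * s * |x k - x j| ^ (1 + 2 * s)) =
      ζ k / (2 * s) * (leftSum (2 * s) ζ x k - rightSum (2 * s) N ζ x k) := by
  simp only [mem_Icc] at hk
  have hterm (j : ℕ) : ζ k * ζ j * (x k - x j) / (2 * s * |x k - x j| ^ (1 + 2 * s)) =
      ζ k / (2 * s) * (ζ j * ((x k - x j) / |x k - x j| ^ (1 + 2 * s))) := by
    ring
  rw [sum_congr rfl fun j _ => hterm j, ← mul_sum, sum_erase_Icc_eq_sum_range_add _ (by simpa),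
    sub_eq_add_neg, leftSum, rightSum, ← sum_neg_distrib]
  congr 2 <;> refine sum_congr rfl fun i hi => ?_ <;> simp only [mem_range] at hi
  · rw [div_abs_rpow_one_add (sub_pos.2 (hx (by simp; omega) (by simp; omega) (by omega)))]
  · rw [← neg_sub (x _), abs_neg, neg_div,
      div_abs_rpow_one_add (sub_pos.2 (hx (by simp; omega) (by simp; omega) (by omega))), mul_neg]

theorem leftSum_pos {t : ℝ} (ht : 0 < t) {ζ x : ℕ → ℝ} {N k : ℕ}
    (hx : StrictMonoOn x (Set.Icc 1 N)) (hk2 : 2 ≤ k) (hkN : k ≤ N)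
    (hζ : ∀ m ≤ k - 1, 0 ≤ ∑ i ∈ range m, ζ (k - 1 - i)) (hζ0 : ζ (k - 1) ≠ 0) :
    0 < leftSum t ζ x k := by
  have hd : StrictMonoOn (fun i => x k - x (k - 1 - i)) (Set.Iio (k - 1)) :=
    fun i hi j hj hij => by
      simp only [Set.mem_Iio] at hi hj
      exact sub_lt_sub_left (hx (by simp; omega) (by simp; omega) (by omega)) _
  have hd_pos : ∀ i ∈ Set.Iio (k - 1), 0 < x k - x (k - 1 - i) := fun i hi => by
    simp only [Set.mem_Iio] at hi
    exact sub_pos.2 (hx (by simp; omega) (by simp; omega) (by omega))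
  exact sum_range_mul_pos_of_sum_range_nonneg (by omega)
    ((Real.strictAntiOn_rpow_Ioi_of_exponent_neg (neg_neg_of_pos ht)).comp_strictMonoOn hd hd_pos)
    (fun i hi => Real.rpow_pos_of_pos (hd_pos i hi) _) hζ (by simpa using hζ0)

theorem rightSum_neg {t : ℝ} (ht : 0 < t) {ζ x : ℕ → ℝ} {N k : ℕ}
    (hx : StrictMonoOn x (Set.Icc 1 N)) (hk1 : 1 ≤ k) (hkN : k < N)
    (hζ : ∀ m ≤ N - k, ∑ i ∈ range m, ζ (k + i + 1) ≤ 0) (hζ0 : ζ (k + 1) ≠ 0) :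
    rightSum t N ζ x k < 0 := by
  have hd : StrictMonoOn (fun i => x (k + i + 1) - x k) (Set.Iio (N - k)) :=
    fun i hi j hj hij => by
      simp only [Set.mem_Iio] at hi hj
      exact sub_lt_sub_right (hx (by simp; omega) (by simp; omega) (by omega)) _
  have hd_pos : ∀ i ∈ Set.Iio (N - k), 0 < x (k + i + 1) - x k := fun i hi => by
    simp only [Set.mem_Iio] at hi
    exact sub_pos.2 (hx (by simp; omega) (by simp; omega) (by omega))
  have := sum_range_mul_pos_of_sum_range_nonneg (a := fun i => -ζ (k + i + 1)) (by omega)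
    ((Real.strictAntiOn_rpow_Ioi_of_exponent_neg (neg_neg_of_pos ht)).comp_strictMonoOn hd hd_pos)
    (fun i hi => Real.rpow_pos_of_pos (hd_pos i hi) _)
    (fun m hm => by simpa [sum_neg_distrib] using hζ m hm) (by simpa using hζ0)
  simp only [neg_mul, sum_neg_distrib, neg_pos] at this
  exact this

theorem leftSum_sub_rightSum_pos {t : ℝ} (ht : 0 < t) {ζ x : ℕ → ℝ} {N k : ℕ} (hN : 2 ≤ N)
    (hx : StrictMonoOn x (Set.Icc 1 N)) (hk : k ∈ Icc 1 N) (hζ0 : ∀ i ∈ Icc 1 N, ζ i ≠ 0)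
    (hleft : ∀ m ≤ k - 1, 0 ≤ ∑ i ∈ range m, ζ (k - 1 - i))
    (hright : ∀ m ≤ N - k, ∑ i ∈ range m, ζ (k + i + 1) ≤ 0) :
    0 < leftSum t ζ x k - rightSum t N ζ x k := by
  simp only [mem_Icc] at hk
  rcases (show k = 1 ∨ 2 ≤ k by omega) with rfl | hk2
  · have := rightSum_neg ht hx le_rfl (by omega) hright (hζ0 2 (by simp; omega))
    simpa [leftSum] using this
  rcases (show k = N ∨ k < N by omega) with rfl | hkN
  · have := leftSum_pos ht hx hk2 le_rfl hleft (hζ0 _ (by simp; omega))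
    simpa [rightSum] using this
  · linarith [leftSum_pos ht hx hk2 hk.2 hleft (hζ0 _ (by simp; omega)),
      rightSum_neg ht hx hk.1 hkN hright (hζ0 _ (by simp; omega))]

theorem no_stationary_points_general
    (s : ℝ) (hs : s ∈ Set.Ioo (0:ℝ) 1)
    (N : ℕ) (hN : 2 ≤ N) :
    ¬ ∃ (ζ : ℕ → ℝ) (x : ℕ → ℝ),
        (∀ i ∈ Finset.Icc 1 N, ζ i = 1 ∨ ζ i = -1) ∧
        (∀ i : ℕ, 1 ≤ i → i < N → x i < x (i + 1)) ∧
        (∀ i ∈ Finset.Icc 1 N,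
          (∑ j ∈ (Finset.Icc 1 N).erase i,
            ζ i * ζ j * (x i - x j) / (2 * s * |x i - x j| ^ (1 + 2 * s))) = 0) := by
  rintro ⟨ζ, x, hζ, hx, hstat⟩
  wlog h1 : ζ 1 = 1 generalizing ζ
  · refine this (-ζ) (fun i hi => ?_) (fun i hi => ?_) ?_
    · rcases hζ i hi with h | h <;> simp [h]
    · simpa [neg_mul_neg] using hstat i hi
    · rcases hζ 1 (by simp; omega) with h | h
      · exact absurd h h1
      · simp [h]
  have hmono : StrictMonoOn x (Set.Icc 1 N) :=
    strictMonoOn_of_lt_succ Set.ordConnected_Icc fun i _ hi hi' => by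
      simp only [Set.mem_Icc, Order.succ_eq_add_one] at hi hi'
      exact hx i hi.1 (by omega)
  have hζ0 : ∀ i ∈ Icc 1 N, ζ i ≠ 0 := fun i hi => by rcases hζ i hi with h | h <;> simp [h]
  have h2s : 0 < 2 * s := by linarith [hs.1]
  obtain ⟨k, hk, hleft, hright⟩ := exists_peak_index (by omega) hζ h1
  have hstat_k := hstat k hk
  rw [sum_interaction_eq_leftSum_sub_rightSum hmono hk] at hstat_k
  exact mul_ne_zero (div_ne_zero (hζ0 k hk) h2s.ne')
    (leftSum_sub_rightSum_pos h2s hN hmono hk hζ0 hleft hright).ne' hstat_k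

/-- Corollary 1.7: the particle system has no stationary points. -/
theorem no_stationary_points
    (s γ : ℝ) (hs : s ∈ Set.Ioo (0:ℝ) 1) (hγ : 0 < γ)
    (N : ℕ) (hN : 2 ≤ N) :
    ¬ ∃ (ζ : ℕ → ℝ) (x : ℕ → ℝ),
        (∀ i ∈ Finset.Icc 1 N, ζ i = 1 ∨ ζ i = -1) ∧
        (∀ i : ℕ, 1 ≤ i → i < N → x i < x (i + 1)) ∧
        (∀ i ∈ Finset.Icc 1 N,
          (∑ j ∈ (Finset.Icc 1 N).erase i,
            ζ i * ζ j * (x i - x j) / (2 * s * |x i - x j| ^ (1 + 2 * s))) = 0) :=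
  no_stationary_points_general s hs N hN

end
end

section
/- Assume the segregate orientation (ζ_i = 1 for i = 1,…,K and ζ_i = −1 for i = K+1,…,N) with 0 < K < N, and assume the collision time T_c is finite. Then there exists c > 0, depending only on s, N, the initial gaps θ_i^0 := x_{i+1}^0 − x_i^0 and T_c, such that for every t ∈ [0,T_c] and every index i ∈ {1,…,N−1} with i ≠ K: x_{i+1}(t) − x_i(t) ≥ c. -/
open Real Filter Finset Topology NNReal
open scoped ENNReal

noncomputable section

/-!
Write `θᵢ = x (i+1) - x i`. For `i ≠ K` the particles `i` and `i+1` have the same orientation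
and repel each other, while the other particles of their block pull them together. If `θᵢ` is the
smallest same-sign gap, a same-sign particle at index distance `k` from the pair is at least `k θᵢ`
away, so by convexity of `w ↦ w ^ (-2s)` on `(0, ∞)` its pull is at most the difference of the
interactions at distances `k θᵢ` and `(k+1) θᵢ`. These differences telescope, and particles of
the opposite sign only push the pair apart, so the net interaction force widening the pair is at
least the interaction at distance `N θᵢ`; once `θᵢ` is small this beats the bounded stress.
Hence for `c` below all initial same-sign gaps and small enough, a same-sign gap increases
whenever it touches `c` while the others are still `≥ c`, and no such gap ever drops below `c`.
-/

def interaction (s w : ℝ) : ℝ := w / (2 * s * |w| ^ (1 + 2 * s))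

-- The `j = i` term vanishes because `interaction s 0 = 0`, so unlike `odeRHS` the sum runs
-- over all indices.
def interactionForce (s : ℝ) (N : ℕ) (ζ p : ℕ → ℝ) (i : ℕ) : ℝ :=
  ∑ j ∈ Icc 1 N, ζ i * ζ j * interaction s (p i - p j)

lemma antitoneOn_rpow_neg_sub_rpow_neg_add {e h : ℝ} (he : 0 < e) (hh : 0 ≤ h) :
    AntitoneOn (fun d : ℝ => d ^ (-e) - (d + h) ^ (-e)) (Set.Ioi 0) := by
  have hderiv : ∀ d ∈ Set.Ioi (0 : ℝ), HasDerivAt (fun d : ℝ => d ^ (-e) - (d + h) ^ (-e))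
      (-e * d ^ (-e - 1) - -e * (d + h) ^ (-e - 1)) d := fun d (hd : 0 < d) =>
    (Real.hasDerivAt_rpow_const (Or.inl hd.ne')).sub
      (HasDerivAt.comp_add_const d h (Real.hasDerivAt_rpow_const (Or.inl (by positivity))))
  refine antitoneOn_of_deriv_nonpos (convex_Ioi 0)
    (fun d hd => (hderiv d hd).continuousAt.continuousWithinAt) (fun d hd => ?_) (fun d hd => ?_)
  · rw [interior_Ioi] at hd
    exact (hderiv d hd).differentiableAt.differentiableWithinAt
  · rw [interior_Ioi] at hd
    have hd : 0 < d := hd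
    rw [(hderiv d hd).deriv]
    have : (d + h) ^ (-e - 1) ≤ d ^ (-e - 1) :=
      Real.rpow_le_rpow_of_nonpos hd (by linarith) (by linarith)
    nlinarith

section Interaction

variable {s : ℝ}

@[simp] lemma interaction_zero : interaction s 0 = 0 := by simp [interaction]

lemma interaction_neg (w : ℝ) : interaction s (-w) = -interaction s w := by
  simp [interaction, neg_div]

lemma interaction_of_pos (hs : 0 < s) {w : ℝ} (hw : 0 < w) :
    interaction s w = w ^ (-(2 * s)) / (2 * s) := by
  have : w ^ (2 * s) ≠ 0 := (Real.rpow_pos_of_pos hw _).ne'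
  rw [interaction, abs_of_pos hw, Real.rpow_add hw, Real.rpow_one, Real.rpow_neg hw.le]
  field_simp

lemma interaction_pos (hs : 0 < s) {w : ℝ} (hw : 0 < w) : 0 < interaction s w := by
  rw [interaction_of_pos hs hw]
  positivity

lemma antitoneOn_interaction (hs : 0 < s) : AntitoneOn (interaction s) (Set.Ioi 0) :=
  fun a (ha : 0 < a) b (hb : 0 < b) hab => by
    rw [interaction_of_pos hs ha, interaction_of_pos hs hb]
    exact div_le_div_of_nonneg_right (Real.rpow_le_rpow_of_nonpos ha hab (by linarith))
      (by linarith)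

lemma tendsto_interaction_nhdsGT_zero (hs : 0 < s) :
    Tendsto (interaction s) (𝓝[>] 0) atTop := by
  refine ((tendsto_rpow_neg_nhdsGT_zero (by linarith : -(2 * s) < 0)).atTop_div_const
    (show (0 : ℝ) < 2 * s by linarith)).congr' ?_
  filter_upwards [self_mem_nhdsWithin] with w (hw : 0 < w)
  rw [interaction_of_pos hs hw]

lemma interaction_add_sub_le (hs : 0 < s) {a d h : ℝ} (ha : 0 < a) (had : a ≤ d) (hh : 0 ≤ h) :
    interaction s (a + h) - interaction s a ≤ interaction s (d + h) - interaction s d := by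
  have hd : 0 < d := ha.trans_le had
  have := antitoneOn_rpow_neg_sub_rpow_neg_add (by linarith : 0 < 2 * s) hh ha hd had
  simp only at this
  rw [interaction_of_pos hs ha, interaction_of_pos hs hd, interaction_of_pos hs (by linarith),
    interaction_of_pos hs (by linarith), div_sub_div_same, div_sub_div_same]
  exact div_le_div_of_nonneg_right (by linarith) (by linarith)

lemma interaction_add_sub_le_mul (hs : 0 < s) {a d h ε : ℝ} (ha : 0 < a) (hd : 0 < d)
    (hh : 0 ≤ h) (hε : ε = -1 ∨ ε = 1 ∧ a ≤ d) :
    interaction s (a + h) - interaction s a ≤ ε * (interaction s (d + h) - interaction s d) := by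
  have hanti := antitoneOn_interaction hs
  rcases hε with rfl | ⟨rfl, had⟩
  · have h1 := hanti ha (show 0 < a + h by linarith) (by linarith)
    have h2 := hanti hd (show 0 < d + h by linarith) (by linarith)
    linarith
  · simpa using interaction_add_sub_le hs ha had hh

end Interaction

lemma Segregate.mul_self_eq_one {ζ : ℕ → ℝ} {K N i : ℕ} (hζ : Segregate ζ K N) (hi : 1 ≤ i)
    (hiN : i ≤ N) : ζ i * ζ i = 1 := by
  rcases le_or_gt i K with hiK | hiK
  · simp [hζ.1 i hi hiK]
  · simp [hζ.2 i hiK hiN]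

lemma Segregate.succ_eq {ζ : ℕ → ℝ} {K N i : ℕ} (hζ : Segregate ζ K N) (hi : 1 ≤ i)
    (hiN : i < N) (hiK : i ≠ K) : ζ (i + 1) = ζ i := by
  rcases lt_or_gt_of_ne hiK with hiK | hiK
  · rw [hζ.1 i hi hiK.le, hζ.1 (i + 1) (by omega) hiK]
  · rw [hζ.2 i hiK hiN.le, hζ.2 (i + 1) (by omega) hiN]

lemma Segregate.mul_eq {ζ : ℕ → ℝ} {K N i j : ℕ} (hζ : Segregate ζ K N) (hi : 1 ≤ i)
    (hiN : i ≤ N) (hj : 1 ≤ j) (hjN : j ≤ N) :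
    ζ i * ζ j = -1 ∨ ζ i * ζ j = 1 ∧ (i ≤ K ↔ j ≤ K) := by
  rcases le_or_gt i K with hiK | hiK <;> rcases le_or_gt j K with hjK | hjK
  · simp [hζ.1 i hi hiK, hζ.1 j hj hjK, hiK, hjK]
  · simp [hζ.1 i hi hiK, hζ.2 j hjK hjN]
  · simp [hζ.2 i hiK hiN, hζ.1 j hj hjK]
  · simp [hζ.2 i hiK hiN, hζ.2 j hjK hjN]
    omega

lemma mul_le_sub_of_le_sub_succ {p : ℕ → ℝ} {a : ℝ} {m n : ℕ} (hmn : m ≤ n)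
    (h : ∀ k ∈ Ico m n, a ≤ p (k + 1) - p k) : ((n : ℝ) - m) * a ≤ p n - p m := by
  have := Finset.card_nsmul_le_sum _ _ _ h
  rwa [Finset.sum_Ico_sub _ hmn, Nat.card_Ico, nsmul_eq_mul, Nat.cast_sub hmn] at this

section Force

variable {s : ℝ} {N K : ℕ} {ζ p : ℕ → ℝ} {i : ℕ}

lemma interactionForce_succ_sub (hζ : Segregate ζ K N) (hi : 1 ≤ i) (hiN : i < N)
    (hiK : i ≠ K) :
    interactionForce s N ζ p (i + 1) - interactionForce s N ζ p i =
      ∑ j ∈ Icc 1 N, ζ i * ζ j * (interaction s (p (i + 1) - p j) - interaction s (p i - p j)) := by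
  simp only [interactionForce, hζ.succ_eq hi hiN hiK, ← Finset.sum_sub_distrib, mul_sub]

lemma interaction_sub_le_sum_left (hs : 0 < s) (hζ : Segregate ζ K N)
    (hp : StrictMonoOn p (Set.Icc 1 N)) (hi : 1 ≤ i) (hiN : i < N)
    (hmin : ∀ m, 1 ≤ m → m < N → m ≠ K → p (i + 1) - p i ≤ p (m + 1) - p m) :
    interaction s (i * (p (i + 1) - p i)) - interaction s (p (i + 1) - p i) ≤
      ∑ j ∈ Ico 1 i, ζ i * ζ j * (interaction s (p (i + 1) - p j) - interaction s (p i - p j)) := by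
  set θ := p (i + 1) - p i
  have hθ : 0 < θ := sub_pos.2 (hp ⟨hi, hiN.le⟩ ⟨by omega, hiN⟩ (by omega))
  let g : ℕ → ℝ := fun j => -interaction s (((i : ℝ) + 1 - j) * θ)
  calc _ = ∑ j ∈ Ico 1 i, (g (j + 1) - g j) := by
        rw [Finset.sum_Ico_sub g hi]; simp only [g]; push_cast; ring_nf
    _ ≤ _ := Finset.sum_le_sum fun j hj => ?_
  obtain ⟨hj, hji⟩ := Finset.mem_Ico.1 hj
  have hji' : (1 : ℝ) ≤ (i : ℝ) - j := by
    have : ((j + 1 : ℕ) : ℝ) ≤ i := by exact_mod_cast hji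
    push_cast at this; linarith
  have key := interaction_add_sub_le_mul hs (a := ((i : ℝ) - j) * θ) (d := p i - p j) (h := θ)
    (ε := ζ i * ζ j) (by nlinarith) (sub_pos.2 (hp ⟨hj, by omega⟩ ⟨hi, hiN.le⟩ hji)) hθ.le ?_
  · have hg : g (j + 1) - g j =
        interaction s (((i : ℝ) - j) * θ + θ) - interaction s (((i : ℝ) - j) * θ) := by
      simp only [g]; push_cast; ring_nf
    rwa [hg, show p (i + 1) - p j = p i - p j + θ by ring]
  rcases hζ.mul_eq hi hiN.le hj (by omega) with h | ⟨h, hiff⟩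
  · exact Or.inl h
  · exact Or.inr ⟨h, mul_le_sub_of_le_sub_succ hji.le fun k hk => by
      obtain ⟨hk1, hk2⟩ := Finset.mem_Ico.1 hk
      exact hmin k (by omega) (by omega) (by omega)⟩

lemma interaction_sub_le_sum_right (hs : 0 < s) (hζ : Segregate ζ K N)
    (hp : StrictMonoOn p (Set.Icc 1 N)) (hi : 1 ≤ i) (hiN : i < N)
    (hmin : ∀ m, 1 ≤ m → m < N → m ≠ K → p (i + 1) - p i ≤ p (m + 1) - p m) :
    interaction s ((N - i) * (p (i + 1) - p i)) - interaction s (p (i + 1) - p i) ≤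
      ∑ j ∈ Ico (i + 2) (N + 1),
        ζ i * ζ j * (interaction s (p (i + 1) - p j) - interaction s (p i - p j)) := by
  set θ := p (i + 1) - p i
  have hθ : 0 < θ := sub_pos.2 (hp ⟨hi, hiN.le⟩ ⟨by omega, hiN⟩ (by omega))
  let g : ℕ → ℝ := fun j => interaction s (((j : ℝ) - i - 1) * θ)
  calc _ = ∑ j ∈ Ico (i + 2) (N + 1), (g (j + 1) - g j) := by
        rw [Finset.sum_Ico_sub g (by omega)]; simp only [g]; push_cast; ring_nf
    _ ≤ _ := Finset.sum_le_sum fun j hj => ?_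
  obtain ⟨hij, hjN⟩ := Finset.mem_Ico.1 hj
  have hij' : (1 : ℝ) ≤ (j : ℝ) - i - 1 := by
    have : ((i + 2 : ℕ) : ℝ) ≤ j := by exact_mod_cast hij
    push_cast at this; linarith
  have key := interaction_add_sub_le_mul hs (a := ((j : ℝ) - i - 1) * θ) (d := p j - p (i + 1))
    (h := θ) (ε := ζ i * ζ j) (by nlinarith)
    (sub_pos.2 (hp ⟨by omega, hiN⟩ ⟨by omega, by omega⟩ (by omega))) hθ.le ?_
  · have hg : g (j + 1) - g j =
        interaction s (((j : ℝ) - i - 1) * θ + θ) - interaction s (((j : ℝ) - i - 1) * θ) := by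
      simp only [g]; push_cast; ring_nf
    rw [hg, show p (i + 1) - p j = -(p j - p (i + 1)) by ring,
      show p i - p j = -(p j - p (i + 1) + θ) by ring, interaction_neg, interaction_neg]
    linarith
  rcases hζ.mul_eq (j := j) hi hiN.le (by omega) (by omega) with h | ⟨h, hiff⟩
  · exact Or.inl h
  · refine Or.inr ⟨h, ?_⟩
    have := mul_le_sub_of_le_sub_succ (p := p) (a := θ) (m := i + 1) (n := j) (by omega)
      fun k hk => by
        obtain ⟨hk1, hk2⟩ := Finset.mem_Ico.1 hk
        exact hmin k (by omega) (by omega) (by omega)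
    push_cast at this
    linarith

theorem interaction_le_interactionForce_succ_sub (hs : 0 < s) (hζ : Segregate ζ K N)
    (hp : StrictMonoOn p (Set.Icc 1 N)) (hi : 1 ≤ i) (hiN : i < N) (hiK : i ≠ K)
    (hmin : ∀ m, 1 ≤ m → m < N → m ≠ K → p (i + 1) - p i ≤ p (m + 1) - p m) :
    interaction s (N * (p (i + 1) - p i)) ≤
      interactionForce s N ζ p (i + 1) - interactionForce s N ζ p i := by
  set θ := p (i + 1) - p i
  have hθ : 0 < θ := sub_pos.2 (hp ⟨hi, hiN.le⟩ ⟨by omega, hiN⟩ (by omega))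
  set term : ℕ → ℝ := fun j =>
    ζ i * ζ j * (interaction s (p (i + 1) - p j) - interaction s (p i - p j))
  have hsplit : ∑ j ∈ Icc 1 N, term j =
      ∑ j ∈ Ico 1 i, term j + (term i + term (i + 1)) + ∑ j ∈ Ico (i + 2) (N + 1), term j := by
    rw [← Finset.Ico_add_one_right_eq_Icc, ← Finset.sum_Ico_consecutive _ hi (by omega : i ≤ N + 1),
      ← Finset.sum_Ico_consecutive _ (by omega : i ≤ i + 2) (by omega : i + 2 ≤ N + 1),
      Finset.sum_Ico_succ_top (by omega : i ≤ i + 1), Finset.sum_Ico_succ_top le_rfl,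
      Finset.Ico_self, Finset.sum_empty, zero_add]
    ring
  have hpair : term i + term (i + 1) = 2 * interaction s θ := by
    simp only [term, hζ.succ_eq hi hiN hiK, hζ.mul_self_eq_one hi hiN.le, sub_self,
      interaction_zero, ← neg_sub (p (i + 1)), interaction_neg]
    ring
  have hfar : interaction s (N * θ) ≤ interaction s ((N - i) * θ) := by
    have : (i : ℝ) < N := by exact_mod_cast hiN
    have : (1 : ℝ) ≤ i := by exact_mod_cast hi
    exact antitoneOn_interaction hs (by simp; nlinarith) (by simp; nlinarith) (by nlinarith)
  have hnear : 0 < interaction s (i * θ) := interaction_pos hs (by positivity)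
  rw [interactionForce_succ_sub hζ hi hiN hiK, hsplit, hpair]
  linarith [interaction_sub_le_sum_left hs hζ hp hi hiN hmin,
    interaction_sub_le_sum_right hs hζ hp hi hiN hmin]

end Force

lemma odeRHS_eq (s γ : ℝ) (N : ℕ) (σ : ℝ → ℝ → ℝ) (ζ : ℕ → ℝ) (δ : ℝ) (x : ℕ → ℝ → ℝ)
    (i : ℕ) (t : ℝ) :
    odeRHS s γ N σ ζ δ x i t =
      γ * (interactionForce s N ζ (fun j => x j t) i - ζ i * σ t (x i t) - ζ i * δ) := by
  rw [odeRHS, interactionForce, ← Finset.sum_erase (Icc 1 N) (a := i) (by simp)]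
  simp only [interaction, mul_div_assoc]

lemma IsODEFlowOn.strictMonoOn {s γ : ℝ} {N : ℕ} {σ : ℝ → ℝ → ℝ} {ζ : ℕ → ℝ} {δ : ℝ}
    {y0 : ℕ → ℝ} {x : ℕ → ℝ → ℝ} {T t : ℝ} (hx : IsODEFlowOn s γ N σ ζ δ y0 x T)
    (ht : t ∈ Set.Ico 0 T) : StrictMonoOn (fun j => x j t) (Set.Icc 1 N) :=
  strictMonoOn_of_lt_succ Set.ordConnected_Icc fun j _ hj hj1 =>
    hx.sep j hj.1 (by simpa using hj1.2) t ht

theorem odeRHS_succ_sub_pos {s γ B : ℝ} {N K : ℕ} {σ : ℝ → ℝ → ℝ} {ζ : ℕ → ℝ} {δ : ℝ}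
    {x : ℕ → ℝ → ℝ} {t : ℝ} {i : ℕ} (hs : 0 < s) (hγ : 0 < γ) (hζ : Segregate ζ K N)
    (hx : StrictMonoOn (fun j => x j t) (Set.Icc 1 N)) (hi : 1 ≤ i) (hiN : i < N) (hiK : i ≠ K)
    (hmin : ∀ m, 1 ≤ m → m < N → m ≠ K → x (i + 1) t - x i t ≤ x (m + 1) t - x m t)
    (hσ : ∀ y, |σ t y| ≤ B) (hB : 2 * B < interaction s (N * (x (i + 1) t - x i t))) :
    0 < odeRHS s γ N σ ζ δ x (i + 1) t - odeRHS s γ N σ ζ δ x i t := by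
  have hforce := interaction_le_interactionForce_succ_sub hs hζ hx hi hiN hiK hmin
  have h1 := abs_le.1 (hσ (x i t))
  have h2 := abs_le.1 (hσ (x (i + 1) t))
  rw [odeRHS_eq, odeRHS_eq, hζ.succ_eq hi hiN hiK, ← mul_sub]
  refine mul_pos hγ ?_
  rcases mul_self_eq_one_iff.1 (hζ.mul_self_eq_one hi hiN.le) with h | h <;> rw [h] <;> linarith

lemma HasDerivAt.eventually_nhdsGT_lt {f : ℝ → ℝ} {f' x : ℝ} (hf : HasDerivAt f f' x)
    (hf' : 0 < f') : ∀ᶠ y in 𝓝[>] x, f x < f y := by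
  filter_upwards [((hasDerivAt_iff_tendsto_slope.1 hf).mono_left (nhdsGT_le_nhdsNE x)).eventually
    (eventually_gt_nhds hf'), self_mem_nhdsWithin] with y hy hxy
  exact (slope_pos_iff hxy).1 hy

theorem le_of_hasDerivAt_pos_at_barrier {ι : Type*} (S : Finset ι) {g : ι → ℝ → ℝ} {T c : ℝ}
    (hcont : ∀ j ∈ S, ContinuousOn (g j) (Set.Icc 0 T)) (h0 : ∀ j ∈ S, c < g j 0)
    (hbarrier : ∀ τ ∈ Set.Ioo 0 T, (∀ k ∈ S, c ≤ g k τ) → ∀ j ∈ S, g j τ = c →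
      ∃ d > 0, HasDerivAt (g j) d τ) :
    ∀ τ ∈ Set.Icc 0 T, ∀ j ∈ S, c ≤ g j τ := by
  set A := {τ | ∀ j ∈ S, c ≤ g j τ}
  have hclosed : IsClosed (A ∩ Set.Icc 0 T) := by
    have : A ∩ Set.Icc 0 T = Set.Icc 0 T ∩ ⋂ j ∈ S, (Set.Icc 0 T ∩ g j ⁻¹' Set.Ici c) := by
      ext τ
      simp only [A, Set.mem_inter_iff, Set.mem_iInter, Set.mem_ofPred_eq, Set.mem_preimage,
        Set.mem_Ici]
      exact ⟨fun ⟨hA, hT⟩ => ⟨hT, fun j hj => ⟨hT, hA j hj⟩⟩,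
        fun ⟨hT, hA⟩ => ⟨fun j hj => (hA j hj).2, hT⟩⟩
    rw [this]
    exact isClosed_Icc.inter (isClosed_biInter fun j hj =>
      (hcont j hj).preimage_isClosed_of_isClosed isClosed_Icc isClosed_Ici)
  refine fun τ hτ => hclosed.Icc_subset_of_forall_mem_nhdsWithin (fun j hj => (h0 j hj).le)
    (fun y ⟨hyA, hy⟩ => ?_) hτ
  refine (Filter.eventually_all_finset S).2 fun j hj => ?_
  rcases (hyA j hj).lt_or_eq with hlt | heq
  · have hcw := ((hcont j hj) y (Set.Ico_subset_Icc_self hy)).mono_of_mem_nhdsWithin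
      (Icc_mem_nhdsGT_of_mem hy)
    exact (hcw.eventually (lt_mem_nhds hlt)).mono fun _ h => h.le
  · have hy0 : 0 < y := hy.1.lt_of_ne fun h => by subst h; linarith [h0 j hj]
    obtain ⟨d, hd, hderiv⟩ := hbarrier y ⟨hy0, hy.2⟩ hyA j hj heq.symm
    exact (hderiv.eventually_nhdsGT_lt hd).mono fun _ h => heq ▸ h.le

theorem other_particles_stay_separated_general
    (s γ : ℝ) (hs : s ∈ Set.Ioo (0:ℝ) 1) (hγ : 0 < γ)
    (σ : ℝ → ℝ → ℝ) (hσ : SigmaAssumption s σ)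
    (N K : ℕ)
    (x0 : ℕ → ℝ) (hx0 : ∀ i : ℕ, 1 ≤ i → i < N → x0 i < x0 (i + 1))
    (ζ : ℕ → ℝ) (hζ : Segregate ζ K N)
    (x : ℕ → ℝ → ℝ) (Tc : ℝ)
    (hx : IsODEFlowOn s γ N σ ζ 0 x0 x Tc) :
    ∃ c > (0:ℝ), ∀ t ∈ Set.Icc (0:ℝ) Tc, ∀ i : ℕ, 1 ≤ i → i < N → i ≠ K →
      c ≤ x (i + 1) t - x i t := by
  obtain ⟨B, hB⟩ := hσ.bdd
  rcases Nat.eq_zero_or_pos N with rfl | hN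
  · exact ⟨1, one_pos, fun _ _ i _ hi => absurd hi (Nat.not_lt_zero i)⟩
  set S := (Ico 1 N).erase K
  have hS : ∀ {i}, i ∈ S ↔ 1 ≤ i ∧ i < N ∧ i ≠ K := by
    simp only [S, Finset.mem_erase, Finset.mem_Ico]; tauto
  obtain ⟨c, hc, hcS, hcB⟩ : ∃ c > 0, (∀ j ∈ S, c < x0 (j + 1) - x0 j) ∧
      2 * B < interaction s (N * c) := by
    have hinit : ∀ᶠ c in 𝓝[>] (0:ℝ), ∀ j ∈ S, c < x0 (j + 1) - x0 j :=
      (eventually_all_finset S).2 fun j hj => nhdsWithin_le_nhds <|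
        eventually_lt_nhds (sub_pos.2 (hx0 j (hS.1 hj).1 (hS.1 hj).2.1))
    have hforce : ∀ᶠ c in 𝓝[>] (0:ℝ), 2 * B < interaction s (N * c) :=
      eventually_nhdsGT_zero_mul_left (by positivity)
        ((tendsto_interaction_nhdsGT_zero hs.1).eventually_gt_atTop _)
    exact ((eventually_mem_nhdsWithin (a := 0)).and (hinit.and hforce)).exists
  have hmem {j : ℕ} (hj : j ∈ S) : j ∈ Icc 1 N ∧ j + 1 ∈ Icc 1 N := by
    obtain ⟨hj1, hjN, -⟩ := hS.1 hj
    exact ⟨Finset.mem_Icc.2 ⟨hj1, hjN.le⟩, Finset.mem_Icc.2 ⟨by omega, hjN⟩⟩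
  refine ⟨c, hc, fun t ht i hi hiN hiK => le_of_hasDerivAt_pos_at_barrier S
    (g := fun j τ => x (j + 1) τ - x j τ) (fun j hj => ?_) (fun j hj => ?_)
    (fun τ hτ hτS j hj hjc => ?_) t ht i (hS.2 ⟨hi, hiN, hiK⟩)⟩
  · exact (hx.cont _ (hmem hj).2).sub (hx.cont _ (hmem hj).1)
  · simpa [hx.init _ (hmem hj).1, hx.init _ (hmem hj).2] using hcS j hj
  · obtain ⟨hj1, hjN, hjK⟩ := hS.1 hj
    refine ⟨_, odeRHS_succ_sub_pos hs.1 hγ hζ (hx.strictMonoOn (Set.Ioo_subset_Ico_self hτ))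
      hj1 hjN hjK (fun m hm1 hmN hmK => hjc ▸ hτS m (hS.2 ⟨hm1, hmN, hmK⟩))
      (fun y => hB τ y hτ.1.le) (by simpa [hjc] using hcB),
      (hx.derivEq _ (hmem hj).2 τ hτ).sub (hx.derivEq _ (hmem hj).1 τ hτ)⟩

/-- Lemma 3.2: away from the central pair, the particles stay at distance `≥ c`. -/
theorem other_particles_stay_separated
    (s γ : ℝ) (hs : s ∈ Set.Ioo (0:ℝ) 1) (hγ : 0 < γ)
    (σ : ℝ → ℝ → ℝ) (hσ : SigmaAssumption s σ)
    (N K : ℕ) (hK : 0 < K) (hKN : K < N)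
    (x0 : ℕ → ℝ) (hx0 : ∀ i : ℕ, 1 ≤ i → i < N → x0 i < x0 (i + 1))
    (ζ : ℕ → ℝ) (hζ : Segregate ζ K N)
    (x : ℕ → ℝ → ℝ) (Tc : ℝ) (hTc : 0 < Tc)
    (hx : IsODEFlowOn s γ N σ ζ 0 x0 x Tc)
    (hcoll : HasCollisionAt N x Tc) :
    ∃ c > (0:ℝ), ∀ t ∈ Set.Icc (0:ℝ) Tc, ∀ i : ℕ, 1 ≤ i → i < N → i ≠ K →
      c ≤ x (i + 1) t - x i t :=
  other_particles_stay_separated_general s γ hs hγ σ hσ N K x0 hx0 ζ hζ x Tc hx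

end
end
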